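/- Let A ∈ M_n(𝕋) be irreducible and strictly periodic with period p and rate λ ∈ ℝ (A^(k+p) = (p·λ) ⊗ A^(k) for all k ≥ 1), and suppose a_{ii} ≥ 1 for every i. Then A^(p) ⊗ e^(A) = (p·λ) ⊗ e^(A); consequently every column of e^(A) is a nonzero vector x satisfying A^(p) ⊗ x = (p·λ) ⊗ x, i.e. a generalised eigenvector of A (of order dividing p). -/

import Mathlib

noncomputable section

/-- Max-plus (tropical) matrix product over `𝕋 = ℝ ∪ {−∞}`, embedded in `EReal`. -/
def mpMul {ι κ μ : Type*} (A : Matrix ι κ EReal) (B : Matrix κ μ EReal) :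
    Matrix ι μ EReal :=
  fun i j => ⨆ k, A i k + B k j

/-- Max-plus identity matrix. -/
def mpId {ι : Type*} [DecidableEq ι] : Matrix ι ι EReal :=
  fun i j => if i = j then (0 : EReal) else ⊥

/-- Max-plus matrix power, `mpPow A 0 = mpId`. -/
def mpPow {ι : Type*} [DecidableEq ι] (A : Matrix ι ι EReal) : ℕ → Matrix ι ι EReal
  | 0 => mpId
  | k + 1 => mpMul (mpPow A k) A

/-- Tropical scalar multiple: add the real scalar `c` to every entry. -/
def smulE {ι κ : Type*} (c : ℝ) (A : Matrix ι κ EReal) : Matrix ι κ EReal :=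
  fun i j => (c : EReal) + A i j

/-- Max-plus matrix-vector product. -/
def mpMulVec {ι κ : Type*} (A : Matrix ι κ EReal) (x : κ → EReal) : ι → EReal :=
  fun i => ⨆ j, A i j + x j

/-- The tropical factorial `k! = 1 ⊗ 2 ⊗ ⋯ ⊗ k = k(k+1)/2`. -/
def tfact (k : ℕ) : ℝ := k * (k + 1) / 2

/-- The tropical matrix exponential `e^(A) = ⨁_{k ≥ 0} (−k(k+1)/2) ⊗ A^(k)`. -/
def mexp {ι : Type*} [DecidableEq ι] (A : Matrix ι ι EReal) : Matrix ι ι EReal :=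
  fun i j => ⨆ k : ℕ, (((-(tfact k) : ℝ) : EReal) + mpPow A k i j)

/-- The scalar tropical exponential `E(a) = sup_k (k·a − k(k+1)/2)`. -/
def Escalar (a : ℝ) : ℝ := ⨆ k : ℕ, ((k : ℝ) * a - tfact k)

/-- Irreducibility: the digraph of `A` is strongly connected. -/
def mpIrreducible {ι : Type*} (A : Matrix ι ι EReal) : Prop :=
  ∀ i j, Relation.TransGen (fun u v => A u v ≠ ⊥) i j

/-- Robustness: the orbit of every nonzero vector over `𝕋` hits an eigenvector. -/
def mpRobust {n : ℕ} (A : Matrix (Fin n) (Fin n) EReal) : Prop :=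
  ∀ x : Fin n → EReal, (∀ i, x i ≠ ⊤) → x ≠ (fun _ => ⊥) →
    ∃ (r : ℕ) (lam : ℝ),
      mpMulVec (mpPow A r) x ≠ (fun _ => ⊥) ∧
      mpMulVec A (mpMulVec (mpPow A r) x) =
        fun i => (lam : EReal) + mpMulVec (mpPow A r) x i

/-- The weight of the closed walk `c 0 → c 1 → ⋯ → c m → c 0`. -/
def cycWeight {ι : Type*} {m : ℕ} (A : Matrix ι ι EReal) (c : Fin (m + 1) → ι) : EReal :=
  ∑ i : Fin (m + 1), A (c i) (c (i + 1))

/-- `c` is a cycle (closed walk) in the digraph of `A`. -/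
def isCycle {ι : Type*} {m : ℕ} (A : Matrix ι ι EReal) (c : Fin (m + 1) → ι) : Prop :=
  ∀ i, A (c i) (c (i + 1)) ≠ ⊥

/-- `lam` is the maximum cycle mean `λ(A)`: attained by some cycle and an upper bound. -/
def isMaxCycleMean {ι : Type*} (A : Matrix ι ι EReal) (lam : ℝ) : Prop :=
  (∃ (m : ℕ) (c : Fin (m + 1) → ι), isCycle A c ∧
      cycWeight A c = ((((m : ℝ) + 1) * lam : ℝ) : EReal)) ∧
  ∀ (m : ℕ) (c : Fin (m + 1) → ι), isCycle A c →
      cycWeight A c ≤ ((((m : ℝ) + 1) * lam : ℝ) : EReal)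

/-- A critical cycle: a cycle whose mean equals `lam = λ(A)`. -/
def isCritCycle {ι : Type*} {m : ℕ} (A : Matrix ι ι EReal) (lam : ℝ)
    (c : Fin (m + 1) → ι) : Prop :=
  isCycle A c ∧ cycWeight A c = ((((m : ℝ) + 1) * lam : ℝ) : EReal)

/-- `v` is a vertex of the critical digraph `C(A)`. -/
def critVertex {ι : Type*} (A : Matrix ι ι EReal) (lam : ℝ) (v : ι) : Prop :=
  ∃ (m : ℕ) (c : Fin (m + 1) → ι) (k : Fin (m + 1)), isCritCycle A lam c ∧ c k = v

/-- `u → v` is an edge of the critical digraph `C(A)`. -/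
def critEdge {ι : Type*} (A : Matrix ι ι EReal) (lam : ℝ) (u v : ι) : Prop :=
  ∃ (m : ℕ) (c : Fin (m + 1) → ι) (k : Fin (m + 1)),
    isCritCycle A lam c ∧ c k = u ∧ c (k + 1) = v

/-- `u` and `v` lie in the same strongly connected component of `C(A)`. -/
def sameCritSCC {ι : Type*} (A : Matrix ι ι EReal) (lam : ℝ) (u v : ι) : Prop :=
  Relation.ReflTransGen (critEdge A lam) u v ∧ Relation.ReflTransGen (critEdge A lam) v u


lemma ereal_add_iSup {ι : Sort*} (x : EReal) (f : ι → EReal) :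
    x + ⨆ i, f i = ⨆ i, x + f i := by
  refine le_antisymm ?_ (iSup_le fun i => add_le_add_right (le_iSup f i) x)
  induction x with
  | bot => simp
  | top =>
    by_cases hb : ∀ i, f i = ⊥
    · simp [hb]
    · push_neg at hb
      obtain ⟨i, hi⟩ := hb
      calc (⊤ : EReal) + ⨆ i, f i ≤ ⊤ := le_top
        _ = ⊤ + f i := (EReal.top_add_of_ne_bot hi).symm
        _ ≤ ⨆ i, ⊤ + f i := le_iSup (fun i => (⊤ : EReal) + f i) i
  | coe r =>
    have h1 : ∀ i, f i ≤ ((-r : ℝ) : EReal) + ⨆ i, (r : EReal) + f i := by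
      intro i
      have h0 : f i = ((-r : ℝ) : EReal) + ((r : EReal) + f i) := by
        rw [← add_assoc, ← EReal.coe_add]
        norm_num
      rw [h0]
      exact add_le_add_right (le_iSup (fun i => (r : EReal) + f i) i) _
    calc (r : EReal) + ⨆ i, f i
        ≤ (r : EReal) + (((-r : ℝ) : EReal) + ⨆ i, (r : EReal) + f i) :=
          add_le_add_right (iSup_le h1) _
      _ = ⨆ i, (r : EReal) + f i := by
          rw [← add_assoc, ← EReal.coe_add]; norm_num

lemma ereal_iSup_add {ι : Sort*} (x : EReal) (f : ι → EReal) :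
    (⨆ i, f i) + x = ⨆ i, f i + x := by
  rw [add_comm, ereal_add_iSup]
  exact iSup_congr fun i => add_comm _ _

lemma mpMul_assoc {ι κ μ ν : Type*} (A : Matrix ι κ EReal) (B : Matrix κ μ EReal)
    (C : Matrix μ ν EReal) : mpMul (mpMul A B) C = mpMul A (mpMul B C) := by
  funext i j
  show (⨆ m, (⨆ l, A i l + B l m) + C m j) = ⨆ l, A i l + ⨆ m, B l m + C m j
  calc (⨆ m, (⨆ l, A i l + B l m) + C m j)
      = ⨆ m, ⨆ l, (A i l + B l m) + C m j := by
        refine iSup_congr fun m => ?_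
        rw [ereal_iSup_add]
    _ = ⨆ l, ⨆ m, A i l + (B l m + C m j) := by
        rw [iSup_comm]
        exact iSup_congr fun l => iSup_congr fun m => add_assoc _ _ _
    _ = ⨆ l, A i l + ⨆ m, B l m + C m j := by
        refine iSup_congr fun l => ?_
        rw [ereal_add_iSup]

lemma mpMul_id {ι κ : Type*} [DecidableEq κ] (A : Matrix ι κ EReal) :
    mpMul A mpId = A := by
  funext i j
  show (⨆ k, A i k + mpId k j) = A i j
  refine le_antisymm (iSup_le fun k => ?_) ?_
  · by_cases h : k = j
    · subst h; simp [mpId]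
    · simp [mpId, h]
  · have := le_iSup (fun k => A i k + mpId k j) j
    simpa [mpId] using this

lemma mpPow_add {ι : Type*} [DecidableEq ι] (A : Matrix ι ι EReal) (a b : ℕ) :
    mpMul (mpPow A a) (mpPow A b) = mpPow A (a + b) := by
  induction b with
  | zero => simpa [mpPow] using mpMul_id (mpPow A a)
  | succ b ih =>
    show mpMul (mpPow A a) (mpMul (mpPow A b) A) = mpMul (mpPow A (a + b)) A
    rw [← mpMul_assoc, ih]

lemma mpPow_step {ι : Type*} [DecidableEq ι] (A : Matrix ι ι EReal)
    (hdiag : ∀ i, (1 : EReal) ≤ A i i) (k : ℕ) (i j : ι) :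
    mpPow A k i j + 1 ≤ mpPow A (k + 1) i j := by
  calc mpPow A k i j + 1 ≤ mpPow A k i j + A j j := add_le_add_right (hdiag j) _
    _ ≤ ⨆ m, mpPow A k i m + A m j := le_iSup (fun m => mpPow A k i m + A m j) j
    _ = mpPow A (k + 1) i j := rfl

lemma iSup_shift (f : ℕ → EReal) (h : f 0 ≤ f 1) : (⨆ k, f k) = ⨆ k, f (k + 1) := by
  refine le_antisymm (iSup_le fun k => ?_) (iSup_le fun k => le_iSup f (k + 1))
  cases k with
  | zero => exact h.trans (le_iSup (fun k => f (k + 1)) 0)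
  | succ k => exact le_iSup (fun k => f (k + 1)) k

lemma neg_one_cancel (X : EReal) : ((-1 : ℝ) : EReal) + (X + 1) = X := by
  rw [add_comm X 1, ← add_assoc, ← EReal.coe_one, ← EReal.coe_add]
  norm_num


theorem stmt_19 {n : ℕ} (A : Matrix (Fin n) (Fin n) EReal)
    (hA : ∀ i j, A i j ≠ ⊤) (hirr : mpIrreducible A)
    (p : ℕ) (hp : 1 ≤ p) (lam : ℝ)
    (hper : ∀ k : ℕ, 1 ≤ k → mpPow A (k + p) = smulE ((p : ℝ) * lam) (mpPow A k))
    (hdiag : ∀ i, (1 : EReal) ≤ A i i) :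
    mpMul (mpPow A p) (mexp A) = smulE ((p : ℝ) * lam) (mexp A) ∧
    ∀ j, ((fun i => mexp A i j) ≠ fun _ => ⊥) ∧
      mpMulVec (mpPow A p) (fun i => mexp A i j) =
        fun i => (((p : ℝ) * lam : ℝ) : EReal) + mexp A i j := by
  have e0 : ((-(tfact 0) : ℝ) : EReal) = 0 := by norm_num [tfact]
  have e1 : ((-(tfact 1) : ℝ) : EReal) = ((-1 : ℝ) : EReal) := by norm_num [tfact]
  have hmain : mpMul (mpPow A p) (mexp A) = smulE ((p : ℝ) * lam) (mexp A) := by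
    funext i j
    have hL : mpMul (mpPow A p) (mexp A) i j
        = ⨆ k : ℕ, (((-(tfact k) : ℝ) : EReal) + mpPow A (k + p) i j) := by
      show (⨆ m, mpPow A p i m + ⨆ k : ℕ, (((-(tfact k) : ℝ) : EReal) + mpPow A k m j)) = _
      calc (⨆ m, mpPow A p i m + ⨆ k : ℕ, (((-(tfact k) : ℝ) : EReal) + mpPow A k m j))
          = ⨆ m, ⨆ k : ℕ, mpPow A p i m + (((-(tfact k) : ℝ) : EReal) + mpPow A k m j) :=
            iSup_congr fun m => ereal_add_iSup _ _
        _ = ⨆ k : ℕ, ⨆ m, (((-(tfact k) : ℝ) : EReal) + (mpPow A p i m + mpPow A k m j)) := by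
            rw [iSup_comm]
            exact iSup_congr fun k => iSup_congr fun m => add_left_comm _ _ _
        _ = ⨆ k : ℕ, (((-(tfact k) : ℝ) : EReal) + ⨆ m, (mpPow A p i m + mpPow A k m j)) :=
            iSup_congr fun k => (ereal_add_iSup _ _).symm
        _ = ⨆ k : ℕ, (((-(tfact k) : ℝ) : EReal) + mpPow A (k + p) i j) := by
            refine iSup_congr fun k => ?_
            have h2 : (⨆ m, mpPow A p i m + mpPow A k m j) = mpPow A (p + k) i j :=
              congrFun (congrFun (mpPow_add A p k) i) j
            rw [h2, Nat.add_comm]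
    have hR : smulE ((p : ℝ) * lam) (mexp A) i j
        = ⨆ k : ℕ, ((((p : ℝ) * lam : ℝ) : EReal)
            + (((-(tfact k) : ℝ) : EReal) + mpPow A k i j)) := by
      show (((p : ℝ) * lam : ℝ) : EReal)
          + (⨆ k : ℕ, (((-(tfact k) : ℝ) : EReal) + mpPow A k i j)) = _
      exact ereal_add_iSup _ _
    rw [hL, hR]
    have h10 : ((-(tfact 0) : ℝ) : EReal) + mpPow A (0 + p) i j
        ≤ ((-(tfact 1) : ℝ) : EReal) + mpPow A (1 + p) i j := by
      rw [e0, e1, zero_add, Nat.zero_add, Nat.add_comm 1 p]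
      calc mpPow A p i j = ((-1 : ℝ) : EReal) + (mpPow A p i j + 1) :=
            (neg_one_cancel _).symm
        _ ≤ ((-1 : ℝ) : EReal) + mpPow A (p + 1) i j :=
            add_le_add_right (mpPow_step A hdiag p i j) _
    have h20 : (((p : ℝ) * lam : ℝ) : EReal) + (((-(tfact 0) : ℝ) : EReal) + mpPow A 0 i j)
        ≤ (((p : ℝ) * lam : ℝ) : EReal) + (((-(tfact 1) : ℝ) : EReal) + mpPow A 1 i j) := by
      refine add_le_add_right ?_ _
      rw [e0, e1, zero_add]
      calc mpPow A 0 i j = ((-1 : ℝ) : EReal) + (mpPow A 0 i j + 1) :=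
            (neg_one_cancel _).symm
        _ ≤ ((-1 : ℝ) : EReal) + mpPow A 1 i j :=
            add_le_add_right (mpPow_step A hdiag 0 i j) _
    rw [iSup_shift (fun k => ((-(tfact k) : ℝ) : EReal) + mpPow A (k + p) i j) h10,
      iSup_shift (fun k => (((p : ℝ) * lam : ℝ) : EReal)
        + (((-(tfact k) : ℝ) : EReal) + mpPow A k i j)) h20]
    refine iSup_congr fun k => ?_
    have he : mpPow A (k + 1 + p) i j
        = (((p : ℝ) * lam : ℝ) : EReal) + mpPow A (k + 1) i j := by
      rw [hper (k + 1) (by omega)]; rfl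
    rw [he, add_left_comm]
  refine ⟨hmain, fun j => ⟨?_, ?_⟩⟩
  · intro h
    have hb := congrFun h j
    have hle : (0 : EReal) ≤ mexp A j j := by
      have h0 : (0 : EReal) = ((-(tfact 0) : ℝ) : EReal) + mpPow A 0 j j := by
        show (0 : EReal) = ((-(tfact 0) : ℝ) : EReal) + mpId j j
        simp [tfact, mpId]
      rw [h0]
      exact le_iSup (fun k => ((-(tfact k) : ℝ) : EReal) + mpPow A k j j) 0
    rw [hb] at hle
    simp at hle
  · funext i
    exact congrFun (congrFun hmain i) j


end
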